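/- In a universal Osborn loop Q, the double left inverse property holds: (x^λ·(xy))·x^λ · x = y for all x, y ∈ Q; i.e., the permutation L_x L_{x^λ} R_{x^λ} R_x is the identity map. -/

import Mathlib

/-- A quasigroup: a magma with left and right division. -/
class Quasigroup (Q : Type*) extends Mul Q where
  ldiv : Q → Q → Q
  rdiv : Q → Q → Q
  mul_ldiv : ∀ a b : Q, a * ldiv a b = b
  ldiv_mul : ∀ a b : Q, ldiv a (a * b) = b
  rdiv_mul : ∀ a b : Q, rdiv a b * b = a
  mul_rdiv : ∀ a b : Q, rdiv (a * b) b = a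

/-- A loop: a quasigroup with a two-sided identity. -/
class Loop (Q : Type*) extends Quasigroup Q, One Q where
  one_mul : ∀ a : Q, 1 * a = a
  mul_one : ∀ a : Q, a * 1 = a

open Quasigroup

/-- Left translation `L_a : y ↦ a·y` as a permutation. -/
def lt {Q : Type*} [Quasigroup Q] (a : Q) : Equiv.Perm Q :=
  ⟨(a * ·), ldiv a, fun b => ldiv_mul a b, fun b => mul_ldiv a b⟩

/-- Right translation `R_a : y ↦ y·a` as a permutation. -/
def rt {Q : Type*} [Quasigroup Q] (a : Q) : Equiv.Perm Q :=
  ⟨(· * a), fun b => rdiv b a, fun b => mul_rdiv b a, fun b => rdiv_mul b a⟩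

/-- The multiplication group: generated by all left and right translations. -/
def MultGroup (Q : Type*) [Quasigroup Q] : Subgroup (Equiv.Perm Q) :=
  Subgroup.closure (Set.range (lt (Q := Q)) ∪ Set.range (rt (Q := Q)))

/-- The left inverse `x^λ` (satisfying `x^λ * x = 1`). -/
def lam {Q : Type*} [Loop Q] (x : Q) : Q := rdiv 1 x

/-- The right inverse `x^ρ` (satisfying `x * x^ρ = 1`). -/
def rinv {Q : Type*} [Loop Q] (x : Q) : Q := ldiv x 1

theorem Quasigroup.eq_of_mul_left_eq {Q : Type*} [Quasigroup Q] {a b c : Q} (h : a * b = a * c) :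
    b = c := by
  rw [← ldiv_mul a b, h, ldiv_mul]

theorem lam_mul {Q : Type*} [Loop Q] (x : Q) : lam x * x = 1 :=
  rdiv_mul 1 x

def IsOsborn (Q : Type*) [Loop Q] : Prop :=
  ∀ x y z : Q, x * ((y * z) * x) = ldiv (lam x) y * (z * x)

namespace IsOsborn

variable {Q : Type*} [Loop Q]

theorem lam_mul_mul_lam_mul (hQ : IsOsborn Q) (x y : Q) :
    ((lam x * (x * y)) * lam x) * x = y := by
  apply Quasigroup.eq_of_mul_left_eq (a := x)
  -- the Osborn identity at `y := x^λ(xy)`, `z := x^λ` has right-hand side `(xy)·(x^λx)`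
  rw [hQ, ldiv_mul, lam_mul, Loop.mul_one]

theorem lt_trans_rt_eq_refl (hQ : IsOsborn Q) (x : Q) :
    (lt x).trans ((lt (lam x)).trans ((rt (lam x)).trans (rt x))) = Equiv.refl Q :=
  Equiv.ext (hQ.lam_mul_mul_lam_mul x)

end IsOsborn

theorem stmt17_general (Q : Type*) [Loop Q]
    (hOs : ∀ x y z : Q, x * ((y * z) * x) = Quasigroup.ldiv (lam x) y * (z * x)) :
    (∀ x y : Q, ((lam x * (x * y)) * lam x) * x = y) ∧
    (∀ x : Q,
      (lt x).trans ((lt (lam x)).trans ((rt (lam x)).trans (rt x))) = Equiv.refl Q) :=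
  ⟨IsOsborn.lam_mul_mul_lam_mul hOs, IsOsborn.lt_trans_rt_eq_refl hOs⟩

theorem stmt17 (Q : Type*) [Loop Q]
    (hOs : ∀ x y z : Q, x * ((y * z) * x) = Quasigroup.ldiv (lam x) y * (z * x))
    (hU : ∀ u v : Q,
      -- the u,v-principal isotope multiplication, left division and left inverse
      (fun mul' ldiv' lam' =>
        ∀ x y z : Q, mul' x (mul' (mul' y z) x) = mul' (ldiv' (lam' x) y) (mul' z x))
      (fun a b : Q => Quasigroup.rdiv a v * Quasigroup.ldiv u b)
      (fun a b : Q => u * Quasigroup.ldiv (Quasigroup.rdiv a v) b)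
      (fun a : Q => Quasigroup.rdiv (u * v) (Quasigroup.ldiv u a) * v)) :
    (∀ x y : Q, ((lam x * (x * y)) * lam x) * x = y) ∧
    (∀ x : Q,
      (lt x).trans ((lt (lam x)).trans ((rt (lam x)).trans (rt x))) = Equiv.refl Q) :=
  stmt17_general Q hOs
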